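/- Let E be a directed graph and A = KE its path algebra over a field K. The following are equivalent: (1) A is left artinian; (2) E has no closed paths and E^0 ∪ E^1 is finite; (3) A is finite dimensional over K. -/

import Mathlib

/-- A directed graph: vertices, edges, source and range maps. -/
structure DGraph : Type 1 where
  V : Type
  Edge : Type
  s : Edge → V
  r : Edge → V

namespace DGraph

/-- A list of edges is composable if consecutive edges match up. -/
def IsComposable (G : DGraph) (l : List G.Edge) : Prop :=
  l.Chain' (fun e f => G.r e = G.s f)

/-- A path in `G`: either a trivial path at a vertex, or a nonempty composable list of edges. -/
def GPath (G : DGraph) : Type :=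
  G.V ⊕ {l : List G.Edge // l ≠ [] ∧ G.IsComposable l}

namespace GPath

variable {G : DGraph}

/-- The source of a path. -/
def src : GPath G → G.V
  | Sum.inl v => v
  | Sum.inr l => G.s (l.1.head l.2.1)

/-- The range of a path. -/
def rng : GPath G → G.V
  | Sum.inl v => v
  | Sum.inr l => G.r (l.1.getLast l.2.1)

/-- The length of a path. -/
def length : GPath G → ℕ
  | Sum.inl _ => 0
  | Sum.inr l => l.1.length

/-- The trivial path at a vertex. -/
def ofVertex (v : G.V) : GPath G := Sum.inl v

/-- The length-one path given by an edge. -/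
def ofEdge (e : G.Edge) : GPath G :=
  Sum.inr ⟨[e], by simp [IsComposable, List.Chain']⟩

/-- Concatenation of composable paths. -/
def comp : (p q : GPath G) → p.rng = q.src → GPath G
  | Sum.inl _, q, _ => q
  | Sum.inr l, Sum.inl _, _ => Sum.inr l
  | Sum.inr l, Sum.inr m, h => Sum.inr ⟨l.1 ++ m.1, by
      refine ⟨by simp [l.2.1], l.2.2.append m.2.2 ?_⟩
      intro x hx y hy
      rw [List.getLast?_eq_some_getLast l.2.1] at hx
      rw [List.head?_eq_head m.2.1] at hy
      cases hx
      cases hy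
      exact h⟩

end GPath

end DGraph

open DGraph

/-- A realization of the path algebra of the graph `G` over the field `K`:
a `K`-algebra with a basis indexed by the paths of `G`, multiplying by concatenation. -/
structure PathAlgebraOn (K : Type) [Field K] (G : DGraph) (A : Type)
    [NonUnitalRing A] [Module K A] where
  basis : Module.Basis (GPath G) K A
  mul_comp : ∀ (p q : GPath G) (h : p.rng = q.src),
      basis p * basis q = basis (p.comp q h)
  mul_ncomp : ∀ p q : GPath G, p.rng ≠ q.src → basis p * basis q = 0

/-- A `K`-subspace of `A` which is a left ideal. -/
def IsLeftIdeal (K : Type) [Field K] (A : Type) [NonUnitalRing A] [Module K A]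
    (S : Submodule K A) : Prop :=
  ∀ a : A, ∀ x ∈ S, a * x ∈ S

/-- A `K`-subspace of `A` which is a right ideal. -/
def IsRightIdeal (K : Type) [Field K] (A : Type) [NonUnitalRing A] [Module K A]
    (S : Submodule K A) : Prop :=
  ∀ a : A, ∀ x ∈ S, x * a ∈ S

/-- The descending chain condition on left ideals. -/
def IsLeftArtinianAlg (K : Type) [Field K] (A : Type) [NonUnitalRing A] [Module K A] : Prop :=
  ∀ f : ℕ → Submodule K A, (∀ m, IsLeftIdeal K A (f m)) → (∀ m, f (m + 1) ≤ f m) →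
    ∃ m, ∀ l, m ≤ l → f l = f m

/-- The ascending chain condition on left ideals. -/
def IsLeftNoetherianAlg (K : Type) [Field K] (A : Type) [NonUnitalRing A] [Module K A] : Prop :=
  ∀ f : ℕ → Submodule K A, (∀ m, IsLeftIdeal K A (f m)) → (∀ m, f m ≤ f (m + 1)) →
    ∃ m, ∀ l, m ≤ l → f l = f m

/-- A minimal left ideal: nonzero, and containing no nonzero proper left subideal. -/
def IsMinimalLeftIdeal (K : Type) [Field K] (A : Type) [NonUnitalRing A] [Module K A]
    (S : Submodule K A) : Prop :=
  IsLeftIdeal K A S ∧ S ≠ ⊥ ∧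
    ∀ T : Submodule K A, IsLeftIdeal K A T → T ≤ S → T = ⊥ ∨ T = S

/-- A minimal right ideal. -/
def IsMinimalRightIdeal (K : Type) [Field K] (A : Type) [NonUnitalRing A] [Module K A]
    (S : Submodule K A) : Prop :=
  IsRightIdeal K A S ∧ S ≠ ⊥ ∧
    ∀ T : Submodule K A, IsRightIdeal K A T → T ≤ S → T = ⊥ ∨ T = S

/-!
If `E` has no closed path, no edge repeats along a path, so paths have length at most `#E¹`;
with `E⁰` and `E¹` finite there are finitely many paths and `KE` is finite dimensional, hence
artinian. Conversely each obstruction gives a weight `w` on paths taking every natural value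
with `w q ≤ w (p q)`: the length divided by that of a closed path, or an enumeration index of
the range vertex, or of the last edge. The spans of the paths of weight `≥ n` then form a
strictly descending chain of left ideals.
-/

namespace DGraph

def IsAcyclic (G : DGraph) : Prop :=
  ¬ ∃ p : GPath G, 0 < p.length ∧ p.src = p.rng

namespace GPath

variable {G : DGraph}

lemma rng_comp (p q : GPath G) (h : p.rng = q.src) : (p.comp q h).rng = q.rng := by
  rcases p with _ | l
  · rfl
  rcases q with _ | m
  · exact h
  · exact congrArg G.r (List.getLast_append_of_right_ne_nil _ _ m.2.1)

lemma length_comp (p q : GPath G) (h : p.rng = q.src) :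
    (p.comp q h).length = p.length + q.length := by
  rcases p with _ | _ <;> rcases q with _ | _ <;> simp [comp, length]

lemma exists_length_eq_mul_of_src_eq_rng {c : GPath G} (hc : c.src = c.rng) (n : ℕ) :
    ∃ p : GPath G, p.length = n * c.length ∧ p.rng = c.rng := by
  induction n with
  | zero => exact ⟨ofVertex c.rng, by simp [ofVertex, length], rfl⟩
  | succ n ih =>
    obtain ⟨p, hlen, hrng⟩ := ih
    refine ⟨p.comp c (hrng.trans hc.symm), ?_, rng_comp _ _ _⟩
    rw [length_comp, hlen, Nat.succ_mul]

end GPath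

end DGraph

lemma List.Duplicate.exists_eq_append {α : Type*} {x : α} {l : List α} (h : List.Duplicate x l) :
    ∃ l₁ l₂ l₃ : List α, l = l₁ ++ x :: l₂ ++ x :: l₃ := by
  induction h with
  | cons_mem hx =>
    obtain ⟨l₂, l₃, rfl⟩ := List.append_of_mem hx
    exact ⟨[], l₂, l₃, rfl⟩
  | cons_duplicate _ ih =>
    obtain ⟨l₁, l₂, l₃, rfl⟩ := ih
    exact ⟨_ :: l₁, l₂, l₃, rfl⟩

namespace DGraph

variable {G : DGraph}

/-- A repeated edge `x` in a composable list cuts out the closed path from `x` up to its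
second occurrence. -/
lemma IsComposable.nodup (hG : G.IsAcyclic) {l : List G.Edge} (hl : G.IsComposable l) :
    l.Nodup := by
  by_contra hdup
  obtain ⟨x, hx⟩ := List.exists_duplicate_iff_not_nodup.mpr hdup
  obtain ⟨l₁, l₂, l₃, rfl⟩ := hx.exists_eq_append
  have hloop : G.IsComposable (x :: l₂ ++ x :: l₃) := hl.infix ⟨l₁, [], by simp⟩
  refine hG ⟨Sum.inr ⟨x :: l₂, by simp, hloop.left_of_append⟩, by simp [GPath.length], ?_⟩
  exact ((List.isChain_append.mp hloop).2.2 _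
    (List.getLast?_eq_some_getLast (by simp)) x rfl).symm

lemma IsAcyclic.finite_gPath (hG : G.IsAcyclic) [Finite G.V] [Finite G.Edge] :
    Finite (GPath G) := by
  have := Fintype.ofFinite G.Edge
  have := (List.finite_length_le G.Edge (Fintype.card G.Edge)).to_subtype
  have : Finite {l : List G.Edge // l ≠ [] ∧ G.IsComposable l} :=
    Finite.of_injective
      (fun l => (⟨l.1, (l.2.2.nodup hG).length_le_card⟩ :
        {l : List G.Edge | l.length ≤ Fintype.card G.Edge}))
      fun a b hab => Subtype.ext (congrArg Subtype.val hab :)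
  exact inferInstanceAs (Finite (G.V ⊕ _))

end DGraph

section PathAlgebra

variable {K : Type} [Field K] {G : DGraph} {A : Type} [NonUnitalRing A] [Module K A]

lemma isLeftArtinianAlg_of_isArtinian [IsArtinian K A] : IsLeftArtinianAlg K A := by
  intro f _ hf
  obtain ⟨n, hn⟩ := IsArtinian.monotone_stabilizes (R := K) (M := A)
    ⟨fun n => OrderDual.toDual (f n), antitone_nat_of_succ_le hf⟩
  exact ⟨n, fun l hl => (hn l hl).symm⟩

namespace PathAlgebraOn

def spanWeightGE (PA : PathAlgebraOn K G A) (w : GPath G → ℕ) (n : ℕ) : Submodule K A :=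
  Submodule.span K (PA.basis '' {p | n ≤ w p})

variable {PA : PathAlgebraOn K G A} {w : GPath G → ℕ} [IsScalarTower K A A]

lemma mul_basis_mem_spanWeightGE
    (hw : ∀ (p q : GPath G) (h : p.rng = q.src), w q ≤ w (p.comp q h))
    {n : ℕ} {q : GPath G} (hq : n ≤ w q) (a : A) : a * PA.basis q ∈ PA.spanWeightGE w n := by
  have ha : a ∈ Submodule.span K (Set.range PA.basis) := PA.basis.span_eq ▸ Submodule.mem_top
  induction ha using Submodule.span_induction with
  | mem x hx =>
    obtain ⟨p, rfl⟩ := hx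
    by_cases h : p.rng = q.src
    · rw [PA.mul_comp p q h]
      exact Submodule.subset_span ⟨_, hq.trans (hw p q h), rfl⟩
    · rw [PA.mul_ncomp p q h]
      exact zero_mem _
  | zero => simpa only [zero_mul] using zero_mem _
  | add x y _ _ hx hy => simpa only [add_mul] using add_mem hx hy
  | smul k x _ hx => simpa only [smul_mul_assoc] using Submodule.smul_mem _ k hx

variable [SMulCommClass K A A]

lemma isLeftIdeal_spanWeightGE
    (hw : ∀ (p q : GPath G) (h : p.rng = q.src), w q ≤ w (p.comp q h))
    (n : ℕ) : IsLeftIdeal K A (PA.spanWeightGE w n) := by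
  intro a x hx
  induction hx using Submodule.span_induction with
  | mem y hy =>
    obtain ⟨q, hq, rfl⟩ := hy
    exact mul_basis_mem_spanWeightGE hw hq a
  | zero => simpa only [mul_zero] using zero_mem _
  | add x y _ _ hx hy => simpa only [mul_add] using add_mem hx hy
  | smul k x _ hx => simpa only [mul_smul_comm] using Submodule.smul_mem _ k hx

lemma not_isLeftArtinianAlg_of_weight (PA : PathAlgebraOn K G A)
    (hw : ∀ (p q : GPath G) (h : p.rng = q.src), w q ≤ w (p.comp q h))
    (hsurj : Function.Surjective w) : ¬ IsLeftArtinianAlg K A := by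
  intro hA
  obtain ⟨m, hm⟩ := hA (PA.spanWeightGE w) (isLeftIdeal_spanWeightGE hw)
    fun n => Submodule.span_mono (Set.image_mono fun p hp => (Nat.le_succ n).trans hp)
  obtain ⟨p, hp⟩ := hsurj m
  have hmem : PA.basis p ∈ PA.spanWeightGE w (m + 1) :=
    hm (m + 1) m.le_succ ▸ Submodule.subset_span ⟨p, hp.ge, rfl⟩
  exact PA.basis.linearIndependent.notMem_span_image (by simp [hp]) hmem

lemma isAcyclic_of_isLeftArtinianAlg (PA : PathAlgebraOn K G A) (hA : IsLeftArtinianAlg K A) :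
    G.IsAcyclic := by
  rintro ⟨c, hc, hcyc⟩
  refine PA.not_isLeftArtinianAlg_of_weight (w := fun p => p.length / c.length)
    (fun p q h => ?_) (fun n => ?_) hA
  · simp only [GPath.length_comp]
    exact Nat.div_le_div_right (Nat.le_add_left _ _)
  · obtain ⟨p, hp, -⟩ := GPath.exists_length_eq_mul_of_src_eq_rng hcyc n
    exact ⟨p, by simp only [hp, Nat.mul_div_cancel _ hc]⟩

lemma finite_vertex_of_isLeftArtinianAlg (PA : PathAlgebraOn K G A) (hA : IsLeftArtinianAlg K A) :
    Finite G.V := by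
  by_contra hV
  have := not_finite_iff_infinite.mp hV
  let ι := Infinite.natEmbedding G.V
  refine PA.not_isLeftArtinianAlg_of_weight (w := fun p => Function.invFun ι p.rng)
    (fun p q h => (congrArg _ (GPath.rng_comp p q h)).ge) (fun n => ?_) hA
  exact ⟨GPath.ofVertex (ι n), Function.leftInverse_invFun ι.injective n⟩

lemma finite_edge_of_isLeftArtinianAlg (PA : PathAlgebraOn K G A) (hA : IsLeftArtinianAlg K A) :
    Finite G.Edge := by
  by_contra hE
  have := not_finite_iff_infinite.mp hE
  let ι := Infinite.natEmbedding G.Edge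
  refine PA.not_isLeftArtinianAlg_of_weight
    (w := Sum.elim (fun _ => 0) fun l => Function.invFun ι (l.1.getLast l.2.1))
    (fun p q h => ?_) (fun n => ?_) hA
  · rcases p with _ | l
    · exact le_rfl
    rcases q with _ | m
    · exact Nat.zero_le _
    · exact (congrArg (Function.invFun ι) (List.getLast_append_of_right_ne_nil _ _ m.2.1)).ge
  · exact ⟨GPath.ofEdge (ι n), Function.leftInverse_invFun ι.injective n⟩

end PathAlgebraOn

end PathAlgebra

/-- `KE` is left artinian iff `E` has no closed paths and `E⁰ ∪ E¹` is
finite, iff `KE` is finite dimensional. -/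
theorem stmt9 (K : Type) [Field K] (G : DGraph)
    (A : Type) [NonUnitalRing A] [Module K A] [SMulCommClass K A A] [IsScalarTower K A A]
    (PA : PathAlgebraOn K G A) :
    (IsLeftArtinianAlg K A ↔
      ((¬ ∃ p : GPath G, 0 < p.length ∧ p.src = p.rng) ∧ Finite G.V ∧ Finite G.Edge)) ∧
    (IsLeftArtinianAlg K A ↔ FiniteDimensional K A) := by
  have hgraph_of_art (hA : IsLeftArtinianAlg K A) : G.IsAcyclic ∧ Finite G.V ∧ Finite G.Edge :=
    ⟨PA.isAcyclic_of_isLeftArtinianAlg hA, PA.finite_vertex_of_isLeftArtinianAlg hA,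
      PA.finite_edge_of_isLeftArtinianAlg hA⟩
  have hfd_of_graph : G.IsAcyclic ∧ Finite G.V ∧ Finite G.Edge → FiniteDimensional K A :=
    fun ⟨hG, _, _⟩ => have := hG.finite_gPath; Module.Finite.of_basis PA.basis
  have hart_of_fd (_ : FiniteDimensional K A) : IsLeftArtinianAlg K A :=
    isLeftArtinianAlg_of_isArtinian
  exact ⟨⟨hgraph_of_art, hart_of_fd ∘ hfd_of_graph⟩,
    ⟨hfd_of_graph ∘ hgraph_of_art, hart_of_fd⟩⟩
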